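/- arXiv:1107.4782 — 2 statements merged into one kernel-verified Lean document; each statement's English description precedes it below -/
import Mathlib

section
/- Kernel difference estimate: Let K(x,y) = (1/|y−x|)[id + ω⊗ω] with ω = (y−x)/|y−x|, a 3×3 matrix-valued kernel defined for x ≠ y in ℝ³. Then there exists a universal constant C > 0 such that for all distinct x, z ∈ ℝ³ and every y ∈ ℝ³ with y ≠ x and y ≠ z, there exist points u₁, u₂, u₃ on the closed line segment joining x and z, each different from y, such that for all i,j ∈ {1,2,3}: |K_{ij}(x,y) − K_{ij}(z,y)| ≤ C |x−z| ( 1/|y−u₁|² + 1/|y−u₂|² + 1/|y−u₃|² ). -/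
/-!
With `a = y - x`, `r = ‖a‖`, the entry `K_{ij}(x,y)` equals `δᵢⱼ / r + ωᵢ âⱼ`, where `ω = a / r` is
the direction and `â = a / r²` the image of `a` under inversion in the unit sphere. With
`b = y - z`, `s = ‖b‖`, each factor varies at the right scale: `|1/r - 1/s| ≤ ‖a - b‖ / (r s)`,
`‖â - b̂‖ = ‖a - b‖ / (r s)` (inversion), `‖ω - η‖ ≤ 2 ‖a - b‖ / r`, while `|ωᵢ| ≤ 1` and
`|b̂ⱼ| ≤ 1 / s`. Hence `|K_{ij}(x,y) - K_{ij}(z,y)| ≤ 4 ‖x - z‖ / (r s)`, and by AM-GM the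
endpoints `u = x, z` of the segment work with `C = 2`.
-/

/-- The `(i,j)` entry of the Darwin kernel `K(x,y) = (1/|y−x|)[id + ω⊗ω]`,
where `ω = (y−x)/|y−x|`. -/
noncomputable def darwinK (i j : Fin 3) (x y : EuclideanSpace ℝ (Fin 3)) : ℝ :=
  ((if i = j then (1 : ℝ) else 0)
    + ((y - x) i / ‖y - x‖) * ((y - x) j / ‖y - x‖)) / ‖y - x‖

section NormedSpace

variable {E : Type*} [NormedAddCommGroup E] {a b : E}

theorem abs_inv_norm_sub_inv_norm_le (ha : a ≠ 0) (hb : b ≠ 0) :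
    |‖a‖⁻¹ - ‖b‖⁻¹| ≤ ‖a - b‖ / (‖a‖ * ‖b‖) := by
  rw [inv_sub_inv (norm_ne_zero_iff.2 ha) (norm_ne_zero_iff.2 hb), abs_div, abs_mul, abs_norm,
    abs_norm, abs_sub_comm]
  gcongr
  exact abs_norm_sub_norm_le a b

theorem norm_inv_norm_smul_sub_inv_norm_smul_le [NormedSpace ℝ E] (ha : a ≠ 0) (hb : b ≠ 0) :
    ‖‖a‖⁻¹ • a - ‖b‖⁻¹ • b‖ ≤ 2 * ‖a - b‖ / ‖a‖ := by
  have hsplit : ‖a‖⁻¹ • a - ‖b‖⁻¹ • b = ‖a‖⁻¹ • (a - b) + (‖a‖⁻¹ - ‖b‖⁻¹) • b := by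
    rw [smul_sub, sub_smul]; abel
  calc ‖‖a‖⁻¹ • a - ‖b‖⁻¹ • b‖
      ≤ ‖a‖⁻¹ * ‖a - b‖ + |‖a‖⁻¹ - ‖b‖⁻¹| * ‖b‖ := by
        rw [hsplit]
        refine (norm_add_le _ _).trans ?_
        rw [norm_smul, norm_smul, Real.norm_eq_abs, Real.norm_eq_abs, abs_inv, abs_norm]
    _ ≤ ‖a‖⁻¹ * ‖a - b‖ + ‖a - b‖ / (‖a‖ * ‖b‖) * ‖b‖ := by
        gcongr; exact abs_inv_norm_sub_inv_norm_le ha hb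
    _ = 2 * ‖a - b‖ / ‖a‖ := by field_simp; ring

end NormedSpace

theorem darwinK_eq (i j : Fin 3) (x y : EuclideanSpace ℝ (Fin 3)) :
    darwinK i j x y = (if i = j then 1 else 0) * ‖y - x‖⁻¹
      + (‖y - x‖⁻¹ • (y - x)) i * ((1 / ‖y - x‖) ^ 2 • (y - x)) j := by
  simp only [darwinK, PiLp.smul_apply, smul_eq_mul]
  ring

theorem two_div_mul_le_add_one_div_sq {r s : ℝ} (hr : 0 < r) (hs : 0 < s) :
    2 / (r * s) ≤ 1 / r ^ 2 + 1 / s ^ 2 := by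
  have hsq : 1 / r ^ 2 + 1 / s ^ 2 - 2 / (r * s) = (1 / r - 1 / s) ^ 2 := by
    field_simp; ring
  linarith [sq_nonneg (1 / r - 1 / s)]

theorem EuclideanSpace.abs_apply_le_norm {ι : Type*} [Fintype ι] (v : EuclideanSpace ℝ ι) (i : ι) :
    |v i| ≤ ‖v‖ :=
  PiLp.norm_apply_le v i

theorem abs_darwinK_sub_darwinK_le (i j : Fin 3) {x y z : EuclideanSpace ℝ (Fin 3)}
    (hyx : y ≠ x) (hyz : y ≠ z) :
    |darwinK i j x y - darwinK i j z y| ≤ 4 * ‖x - z‖ / (‖y - x‖ * ‖y - z‖) := by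
  rw [darwinK_eq, darwinK_eq]
  set a := y - x
  set b := y - z
  have ha : a ≠ 0 := sub_ne_zero.2 hyx
  have hb : b ≠ 0 := sub_ne_zero.2 hyz
  have hd : ‖x - z‖ = ‖a - b‖ := by rw [sub_sub_sub_cancel_left, norm_sub_rev]
  set δ : ℝ := if i = j then 1 else 0
  have hδ : |δ| ≤ 1 := by unfold δ; split_ifs <;> simp
  have hω : |(‖a‖⁻¹ • a) i| ≤ 1 :=
    (EuclideanSpace.abs_apply_le_norm _ i).trans (norm_smul_inv_norm ha).le
  have hω_sub : |(‖a‖⁻¹ • a) i - (‖b‖⁻¹ • b) i| ≤ 2 * ‖a - b‖ / ‖a‖ :=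
    (EuclideanSpace.abs_apply_le_norm (‖a‖⁻¹ • a - ‖b‖⁻¹ • b) i).trans
      (norm_inv_norm_smul_sub_inv_norm_smul_le ha hb)
  have hinv_sub : |((1 / ‖a‖) ^ 2 • a) j - ((1 / ‖b‖) ^ 2 • b) j| ≤ ‖a - b‖ / (‖a‖ * ‖b‖) := by
    refine (EuclideanSpace.abs_apply_le_norm ((1 / ‖a‖) ^ 2 • a - (1 / ‖b‖) ^ 2 • b) j).trans
      (le_of_eq ?_)
    rw [← dist_eq_norm, dist_div_norm_sq_smul ha hb, dist_eq_norm]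
    ring
  have hinv : |((1 / ‖b‖) ^ 2 • b) j| ≤ 1 / ‖b‖ := by
    refine (EuclideanSpace.abs_apply_le_norm _ j).trans (le_of_eq ?_)
    rw [norm_smul, norm_pow, Real.norm_eq_abs, abs_of_pos (by positivity)]
    field_simp
  rw [hd]
  calc _ = |δ * (‖a‖⁻¹ - ‖b‖⁻¹)
          + (‖a‖⁻¹ • a) i * (((1 / ‖a‖) ^ 2 • a) j - ((1 / ‖b‖) ^ 2 • b) j)
          + ((‖a‖⁻¹ • a) i - (‖b‖⁻¹ • b) i) * ((1 / ‖b‖) ^ 2 • b) j| := by congr 1; ring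
    _ ≤ 1 * (‖a - b‖ / (‖a‖ * ‖b‖)) + 1 * (‖a - b‖ / (‖a‖ * ‖b‖))
          + 2 * ‖a - b‖ / ‖a‖ * (1 / ‖b‖) := by
        refine (abs_add_three _ _ _).trans ?_
        simp only [abs_mul]
        gcongr
        exact abs_inv_norm_sub_inv_norm_le ha hb
    _ = 4 * ‖a - b‖ / (‖a‖ * ‖b‖) := by field_simp; ring

/-- Kernel difference estimate: there is a universal constant `C > 0` such that for all
distinct `x, z` and all `y` different from both, there are points `u₁, u₂, u₃` on the closed
segment joining `x` and `z`, each different from `y`, with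
`|K_{ij}(x,y) − K_{ij}(z,y)| ≤ C |x−z| (1/|y−u₁|² + 1/|y−u₂|² + 1/|y−u₃|²)` for all `i,j`. -/
theorem darwin_kernel_difference_estimate :
    ∃ C > 0, ∀ x z y : EuclideanSpace ℝ (Fin 3), x ≠ z → y ≠ x → y ≠ z →
      ∃ u₁ ∈ segment ℝ x z, ∃ u₂ ∈ segment ℝ x z, ∃ u₃ ∈ segment ℝ x z,
        u₁ ≠ y ∧ u₂ ≠ y ∧ u₃ ≠ y ∧
        ∀ i j : Fin 3,
          |darwinK i j x y - darwinK i j z y|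
            ≤ C * ‖x - z‖ * (1 / ‖y - u₁‖ ^ 2 + 1 / ‖y - u₂‖ ^ 2 + 1 / ‖y - u₃‖ ^ 2) := by
  refine ⟨2, two_pos, fun x z y _ hyx hyz => ?_⟩
  refine ⟨x, left_mem_segment ℝ x z, z, right_mem_segment ℝ x z, z, right_mem_segment ℝ x z,
    hyx.symm, hyz.symm, hyz.symm, fun i j => ?_⟩
  have hr : 0 < ‖y - x‖ := norm_pos_iff.2 (sub_ne_zero.2 hyx)
  have hs : 0 < ‖y - z‖ := norm_pos_iff.2 (sub_ne_zero.2 hyz)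
  calc |darwinK i j x y - darwinK i j z y|
      ≤ 4 * ‖x - z‖ / (‖y - x‖ * ‖y - z‖) := abs_darwinK_sub_darwinK_le i j hyx hyz
    _ = 2 * ‖x - z‖ * (2 / (‖y - x‖ * ‖y - z‖)) := by ring
    _ ≤ 2 * ‖x - z‖ * (1 / ‖y - x‖ ^ 2 + 1 / ‖y - z‖ ^ 2 + 1 / ‖y - z‖ ^ 2) := by
        gcongr
        linarith [two_div_mul_le_add_one_div_sq hr hs, one_div_nonneg.2 (sq_nonneg ‖y - z‖)]
end

section
/- Difference estimate for the normalized direction field: Let x, z ∈ ℝ³ be distinct, and let y ∈ ℝ³ not lie on the closed line segment joining x and z. Then there exists a point u on that closed segment such that | (y−x)/|y−x|² − (y−z)/|y−z|² | ≤ 3 |x−z| / |y−u|². -/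
/-!
Inversion in the unit sphere about `y` sends `x` and `z` to `y + (x - y) / |x - y|²` and
`y + (z - y) / |z - y|²`, and it scales distances: their distance is `|x - z| / (|y - x| |y - z|)`.
Bounding the larger of `|y - x|`, `|y - z|` below by the smaller one and taking `u` to be the
nearer endpoint gives the estimate.
-/

section InnerProductSpace

variable {F : Type*} [NormedAddCommGroup F] [InnerProductSpace ℝ F]

theorem norm_inv_norm_sq_smul_sub_inv_norm_sq_smul {a b : F} (ha : a ≠ 0) (hb : b ≠ 0) :
    ‖(‖a‖ ^ 2)⁻¹ • a - (‖b‖ ^ 2)⁻¹ • b‖ = ‖a - b‖ / (‖a‖ * ‖b‖) := by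
  simpa [← dist_eq_norm, div_eq_inv_mul] using dist_div_norm_sq_smul ha hb 1

theorem norm_inv_norm_sq_smul_sub_inv_norm_sq_smul_le {a b : F} (ha : a ≠ 0) (hab : ‖a‖ ≤ ‖b‖) :
    ‖(‖a‖ ^ 2)⁻¹ • a - (‖b‖ ^ 2)⁻¹ • b‖ ≤ ‖a - b‖ / ‖a‖ ^ 2 := by
  have ha' : 0 < ‖a‖ := norm_pos_iff.2 ha
  have hb : b ≠ 0 := norm_pos_iff.1 (ha'.trans_le hab)
  rw [norm_inv_norm_sq_smul_sub_inv_norm_sq_smul ha hb, sq]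
  gcongr

end InnerProductSpace

theorem direction_field_difference_estimate_general
    (x z y : EuclideanSpace ℝ (Fin 3)) (hy : y ∉ segment ℝ x z) :
    ∃ u ∈ segment ℝ x z,
      ‖(‖y - x‖ ^ 2)⁻¹ • (y - x) - (‖y - z‖ ^ 2)⁻¹ • (y - z)‖
        ≤ 3 * ‖x - z‖ / ‖y - u‖ ^ 2 := by
  have hyx : y - x ≠ 0 := sub_ne_zero.2 fun h => hy (h ▸ left_mem_segment ℝ x z)
  have hyz : y - z ≠ 0 := sub_ne_zero.2 fun h => hy (h ▸ right_mem_segment ℝ x z)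
  suffices ∃ u ∈ segment ℝ x z,
      ‖(‖y - x‖ ^ 2)⁻¹ • (y - x) - (‖y - z‖ ^ 2)⁻¹ • (y - z)‖ ≤ ‖x - z‖ / ‖y - u‖ ^ 2 by
    obtain ⟨u, hu, hle⟩ := this
    exact ⟨u, hu, hle.trans (by gcongr; linarith [norm_nonneg (x - z)])⟩
  rcases le_total ‖y - x‖ ‖y - z‖ with h | h
  · refine ⟨x, left_mem_segment ℝ x z, ?_⟩
    simpa [norm_sub_rev z x] using norm_inv_norm_sq_smul_sub_inv_norm_sq_smul_le hyx h
  · refine ⟨z, right_mem_segment ℝ x z, ?_⟩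
    rw [norm_sub_rev]
    simpa using norm_inv_norm_sq_smul_sub_inv_norm_sq_smul_le hyz h

/-- Difference estimate for the normalized direction field: if `x ≠ z` and `y` does not lie
on the closed segment joining `x` and `z`, then there is a point `u` on that segment with
`| (y−x)/|y−x|² − (y−z)/|y−z|² | ≤ 3 |x−z| / |y−u|²`. -/
theorem direction_field_difference_estimate
    (x z y : EuclideanSpace ℝ (Fin 3)) (hxz : x ≠ z) (hy : y ∉ segment ℝ x z) :
    ∃ u ∈ segment ℝ x z,
      ‖(‖y - x‖ ^ 2)⁻¹ • (y - x) - (‖y - z‖ ^ 2)⁻¹ • (y - z)‖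
        ≤ 3 * ‖x - z‖ / ‖y - u‖ ^ 2 :=
  direction_field_difference_estimate_general x z y hy
end
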